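/- arXiv:2010.04208 — 2 statements merged into one kernel-verified Lean document; each statement's English description precedes it below -/
import Mathlib

section
/- Let R be a local ring with maximal ideal m consisting of zero-divisors and satisfying property (A). Let R → S be a semicontent algebra. Then R → S is McCoy. -/
/-- The Ohm-Rush content of `f ∈ S`: the intersection of all ideals `I` of `R`
with `f ∈ IS`. -/
def orContent (R : Type*) [CommRing R] {S : Type*} [CommRing S] [Algebra R S] (f : S) :
    Ideal R :=
  sInf {I : Ideal R | f ∈ I.map (algebraMap R S)}

/-- `S` is an Ohm-Rush `R`-algebra if each `f ∈ S` lies in `c(f)S`,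
i.e. there is a minimal ideal `I` with `f ∈ IS`. -/
def IsOhmRush (R S : Type*) [CommRing R] [CommRing S] [Algebra R S] : Prop :=
  ∀ f : S, f ∈ (orContent R f).map (algebraMap R S)

/-- `S` is a McCoy `R`-algebra if whenever `f * g = 0` with `g ≠ 0`,
some nonzero `r ∈ R` annihilates the content of `f`. -/
def IsMcCoy (R S : Type*) [CommRing R] [CommRing S] [Algebra R S] : Prop :=
  ∀ f g : S, f * g = 0 → g ≠ 0 → ∃ r : R, r ≠ 0 ∧ ∀ a ∈ orContent R f, r * a = 0

/-- `S` is a weak content `R`-algebra: Ohm-Rush and `rad c(fg) = rad (c(f)c(g))`. -/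
def IsWeakContent (R S : Type*) [CommRing R] [CommRing S] [Algebra R S] : Prop :=
  IsOhmRush R S ∧ ∀ f g : S,
    (orContent R (f * g)).radical = (orContent R f * orContent R g).radical

/-- Property (A): every finitely generated ideal consisting of zero-divisors
has a nonzero annihilator. -/
def HasPropertyA (R : Type*) [CommRing R] : Prop :=
  ∀ J : Ideal R, J.FG → (∀ a ∈ J, a ∉ nonZeroDivisors R) →
    ∃ r : R, r ≠ 0 ∧ ∀ a ∈ J, a * r = 0

/-- Fidel (A): every quotient has property (A). -/
def HasFidelA (R : Type*) [CommRing R] : Prop :=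
  ∀ I : Ideal R, HasPropertyA (R ⧸ I)

/-- `S` is a semicontent `R`-algebra: faithfully flat, Ohm-Rush, and for every
multiplicative set `W ⊆ R` meeting `c(f)`, `c(fg)` and `c(g)` agree after
localizing at `W`. -/
def IsSemicontent (R S : Type*) [CommRing R] [CommRing S] [Algebra R S] : Prop :=
  Module.FaithfullyFlat R S ∧ IsOhmRush R S ∧
    ∀ (W : Submonoid R) (f g : S), (∃ w ∈ W, w ∈ orContent R f) →
      (orContent R (f * g)).map (algebraMap R (Localization W)) =
        (orContent R g).map (algebraMap R (Localization W))


lemma orContent_zero (R : Type*) [CommRing R] {S : Type*} [CommRing S] [Algebra R S] :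
    orContent R (0 : S) = ⊥ := by
  refine le_antisymm (sInf_le ?_) bot_le
  simp [Set.mem_setOf_eq]

lemma orContent_fg {R S : Type*} [CommRing R] [CommRing S] [Algebra R S]
    (hor : IsOhmRush R S) (f : S) : (orContent R f).FG := by
  classical
  have hf := hor f
  rw [Ideal.map, Ideal.span] at hf
  obtain ⟨t, hts, hft⟩ := Submodule.mem_span_finite_of_mem_span hf
  obtain ⟨u, hu, hut⟩ := Finset.subset_set_image_iff.mp hts
  rw [← hut, Finset.coe_image] at hft
  refine ⟨u, le_antisymm (Ideal.span_le.mpr hu) (sInf_le ?_)⟩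
  show f ∈ (Ideal.span (u : Set R)).map (algebraMap R S)
  rw [Ideal.map_span]
  exact hft

/-- Let `R` be a local ring whose maximal ideal consists of zero-divisors and
which satisfies property (A). Then every semicontent `R`-algebra is McCoy. -/
theorem stmt_9 (R S : Type*) [CommRing R] [CommRing S] [Algebra R S]
    [IsLocalRing R]
    (hzd : ∀ a ∈ IsLocalRing.maximalIdeal R, a ∉ nonZeroDivisors R)
    (hA : HasPropertyA R)
    (hsc : IsSemicontent R S) :
    IsMcCoy R S := by
  obtain ⟨hff, hor, hW⟩ := hsc
  intro f g hfg hg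
  by_cases hm : orContent R f ≤ IsLocalRing.maximalIdeal R
  · -- content of f consists of zero-divisors
    obtain ⟨r, hr, hann⟩ := hA (orContent R f) (orContent_fg hor f)
      (fun a ha => hzd a (hm ha))
    exact ⟨r, hr, fun a ha => by rw [mul_comm]; exact hann a ha⟩
  · -- c(f) = ⊤, so localize at the trivial submonoid
    have htop : orContent R f = ⊤ := by
      by_contra h
      exact hm (IsLocalRing.le_maximalIdeal h)
    have h1 : ∃ w ∈ (⊥ : Submonoid R), w ∈ orContent R f :=
      ⟨1, rfl, htop ▸ trivial⟩
    have hloc := hW ⊥ f g h1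
    rw [hfg, orContent_zero, Ideal.map_bot] at hloc
    have hinj : Function.Injective (algebraMap R (Localization (⊥ : Submonoid R))) := by
      apply IsLocalization.injective (M := (⊥ : Submonoid R))
      intro x hx
      rw [Submonoid.mem_bot] at hx
      subst hx; exact one_mem _
    have hcg : orContent R g = ⊥ := by
      refine le_antisymm (fun a ha => ?_) bot_le
      have : algebraMap R (Localization (⊥ : Submonoid R)) a ∈
          (orContent R g).map (algebraMap R (Localization (⊥ : Submonoid R))) :=
        Ideal.mem_map_of_mem _ ha
      rw [← hloc] at this
      simpa using hinj (by simpa using this : _ = algebraMap R _ 0)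
    exact absurd (by simpa [hcg, Ideal.map_bot] using hor g) hg
end

section
/- Let R be Noetherian and R → S a faithfully flat Ohm-Rush algebra. Then S is a weak content R-algebra if and only if R → S is residually McCoy (R/I → S/IS is McCoy for all ideals I of R). -/
/-! If `R ⧸ P` is a domain, the McCoy property says that `f g ∈ P S` forces `c(f) ⊆ P` or
`g ∈ P S`; hence every prime containing `c(f g)` contains `c(f) c(g)`, which is the nontrivial half
of weak content.

Conversely, for a weak content algebra, `b ∈ c(f)` and `f g ∈ I S` give `bⁿ g ∈ I S`: for radical
`I` this is `b c(g) ⊆ √c(f g) ⊆ I`, and in general it follows by Noetherian induction on `I`, using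
flatness to compute `(I : t) S`. Thus if `g ∉ I S`, no element of `c(f)` is regular modulo `I`, and
in the Noetherian ring `R ⧸ I` an ideal of zero divisors has a nonzero annihilator. -/

section

variable {R S : Type*} [CommRing R] [CommRing S] [Algebra R S]

theorem orContent_le_of_mem {f : S} {I : Ideal R} (h : f ∈ I.map (algebraMap R S)) :
    orContent R f ≤ I :=
  sInf_le h

theorem IsOhmRush.mem_map_iff (hOR : IsOhmRush R S) {f : S} {I : Ideal R} :
    f ∈ I.map (algebraMap R S) ↔ orContent R f ≤ I :=
  ⟨orContent_le_of_mem, fun h => Ideal.map_mono h (hOR f)⟩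

theorem IsOhmRush.orContent_mul_le_inf (hOR : IsOhmRush R S) (f g : S) :
    orContent R (f * g) ≤ orContent R f ⊓ orContent R g :=
  le_inf (orContent_le_of_mem (Ideal.mul_mem_right g _ (hOR f)))
    (orContent_le_of_mem (Ideal.mul_mem_left _ f (hOR g)))

theorem IsOhmRush.orContent_quotient (hOR : IsOhmRush R S) (I : Ideal R) (f : S) :
    orContent (R ⧸ I) (Ideal.Quotient.mk (I.map (algebraMap R S)) f) =
      (orContent R f).map (Ideal.Quotient.mk I) := by
  have hmap (J : Ideal R) : (J.map (Ideal.Quotient.mk I)).map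
      (algebraMap (R ⧸ I) (S ⧸ I.map (algebraMap R S))) =
      (J.map (algebraMap R S)).map (Ideal.Quotient.mk (I.map (algebraMap R S))) := by
    rw [Ideal.map_map, Ideal.map_map]; rfl
  refine le_antisymm (orContent_le_of_mem ?_) (le_sInf fun J' hJ' => ?_)
  · rw [hmap]
    exact Ideal.mem_map_of_mem _ (hOR f)
  · obtain ⟨J, hIJ, rfl⟩ : ∃ J, I ≤ J ∧ J.map (Ideal.Quotient.mk I) = J' :=
      ⟨J'.comap _, fun x hx => by simp [Ideal.Quotient.eq_zero_iff_mem.mpr hx],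
        Ideal.map_comap_of_surjective _ Ideal.Quotient.mk_surjective _⟩
    refine Ideal.map_mono (orContent_le_of_mem ?_)
    have hf := Ideal.mem_comap.mpr ((hmap J).le hJ')
    rwa [Ideal.comap_map_mk (Ideal.map_mono hIJ)] at hf

theorem algebraMap_mul_mem_map_of_mem_map_colon {I : Ideal R} {t : R} {s : S}
    (hs : s ∈ (I.colon {t}).map (algebraMap R S)) :
    algebraMap R S t * s ∈ I.map (algebraMap R S) := by
  have hle : Ideal.span {t} * I.colon {t} ≤ I :=
    Ideal.span_singleton_mul_le_iff.mpr fun x hx => by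
      simpa [mul_comm] using Submodule.mem_colon_singleton.mp hx
  refine Ideal.map_mono hle ?_
  rw [Ideal.map_mul]
  exact Ideal.mul_mem_mul (Ideal.mem_map_of_mem _ (Ideal.mem_span_singleton_self t)) hs

theorem mem_map_colon_of_algebraMap_mul_mem [Module.Flat R S] {I : Ideal R} {t : R} {s : S}
    (h : algebraMap R S t * s ∈ I.map (algebraMap R S)) :
    s ∈ (I.colon {t}).map (algebraMap R S) := by
  -- Tensor the exact sequence `0 → I : t → R → R ⧸ I`, `x ↦ x t`, with the flat module `S`.
  let φ : R →ₗ[R] R ⧸ I := LinearMap.toSpanSingleton R (R ⧸ I) (Ideal.Quotient.mk I t)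
  have hker : LinearMap.ker φ = I.colon {t} := by
    ext x
    rw [LinearMap.mem_ker, LinearMap.toSpanSingleton_apply, Submodule.mem_colon_singleton,
      Algebra.smul_def, Ideal.Quotient.algebraMap_eq, ← map_mul, Ideal.Quotient.eq_zero_iff_mem,
      smul_eq_mul]
  have hφ : LinearMap.rTensor S φ (1 ⊗ₜ[R] s) = 0 := by
    apply (TensorProduct.quotTensorEquivQuotSMul S I).injective
    rwa [LinearMap.rTensor_tmul, map_zero, LinearMap.toSpanSingleton_apply, one_smul,
      TensorProduct.quotTensorEquivQuotSMul_mk_tmul, Submodule.Quotient.mk_eq_zero,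
      Ideal.smul_top_eq_map, Submodule.restrictScalars_mem, Algebra.smul_def]
  obtain ⟨z, hz⟩ := (Module.Flat.rTensor_exact S (LinearMap.exact_subtype_ker_map φ) _).mp hφ
  have : s ∈ LinearMap.ker φ • (⊤ : Submodule R S) := by
    rw [← Submodule.map_range_rTensor_subtype_lid]
    exact ⟨_, ⟨z, hz⟩, by simp⟩
  rwa [hker, Ideal.smul_top_eq_map] at this

theorem IsMcCoy.orContent_eq_bot_of_mul_eq_zero [NoZeroDivisors R] (h : IsMcCoy R S) {f g : S}
    (hfg : f * g = 0) (hg : g ≠ 0) : orContent R f = ⊥ := by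
  obtain ⟨r, hr, hrf⟩ := h f g hfg hg
  exact (Submodule.eq_bot_iff _).mpr fun a ha => (mul_eq_zero.mp (hrf a ha)).resolve_left hr

theorem IsOhmRush.orContent_le_or_mem_of_isMcCoy (hOR : IsOhmRush R S) (P : Ideal R) [P.IsPrime]
    (hP : IsMcCoy (R ⧸ P) (S ⧸ P.map (algebraMap R S))) {f g : S}
    (hfg : f * g ∈ P.map (algebraMap R S)) :
    orContent R f ≤ P ∨ g ∈ P.map (algebraMap R S) := by
  refine or_iff_not_imp_right.mpr fun hg => ?_
  have hbot := hP.orContent_eq_bot_of_mul_eq_zero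
    (by rwa [← map_mul, Ideal.Quotient.eq_zero_iff_mem]) (mt Ideal.Quotient.eq_zero_iff_mem.mp hg)
  rwa [hOR.orContent_quotient, Ideal.map_eq_bot_iff_le_ker, Ideal.mk_ker] at hbot

theorem IsOhmRush.isWeakContent_of_isMcCoy (hOR : IsOhmRush R S)
    (hMc : ∀ P : Ideal R, P.IsPrime → IsMcCoy (R ⧸ P) (S ⧸ P.map (algebraMap R S))) :
    IsWeakContent R S := by
  refine ⟨hOR, fun f g => le_antisymm ?_ ?_⟩
  · rw [Ideal.radical_mul, ← Ideal.radical_inf]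
    exact Ideal.radical_mono (hOR.orContent_mul_le_inf f g)
  · rw [Ideal.radical_le_radical_iff, Ideal.radical_eq_sInf]
    refine le_sInf fun P ⟨hP, hPprime⟩ => ?_
    rcases hOR.orContent_le_or_mem_of_isMcCoy P (hMc P hPprime) (hOR.mem_map_iff.mpr hP) with
      hf | hg
    · exact Ideal.mul_le_left.trans hf
    · exact Ideal.mul_le_right.trans (orContent_le_of_mem hg)

theorem IsWeakContent.algebraMap_mul_mem_map_of_isRadical (hWC : IsWeakContent R S) {I : Ideal R}
    (hI : I.IsRadical) {f g : S} {b : R} (hb : b ∈ orContent R f)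
    (hfg : f * g ∈ I.map (algebraMap R S)) : algebraMap R S b * g ∈ I.map (algebraMap R S) := by
  refine algebraMap_mul_mem_map_of_mem_map_colon (Ideal.map_mono (fun x hx => ?_) (hWC.1 g))
  have hbx : b * x ∈ (orContent R (f * g)).radical :=
    hWC.2 f g ▸ Ideal.le_radical (Ideal.mul_mem_mul hb hx)
  rw [Submodule.mem_colon_singleton, smul_eq_mul, mul_comm]
  exact hI (Ideal.radical_mono (orContent_le_of_mem hfg) hbx)

theorem Ideal.exists_notMem_forall_mul_mem_of_pow_le {I J : Ideal R} {n : ℕ} (hJ : J ^ n ≤ I)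
    (hI : I ≠ ⊤) : ∃ t ∉ I, ∀ x ∈ J, t * x ∈ I := by
  induction n with
  | zero => exact absurd (top_le_iff.mp (by simpa using hJ)) hI
  | succ n ih =>
    by_cases h : J ^ n ≤ I
    · exact ih h
    · obtain ⟨t, ht, htI⟩ := SetLike.not_le_iff_exists.mp h
      exact ⟨t, htI, fun x hx => hJ (pow_succ J n ▸ Ideal.mul_mem_mul ht hx)⟩

theorem IsWeakContent.exists_pow_mul_mem_map [IsNoetherianRing R] [Module.Flat R S]
    (hWC : IsWeakContent R S) {f g : S} {b : R} (hb : b ∈ orContent R f) {I : Ideal R}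
    (hfg : f * g ∈ I.map (algebraMap R S)) :
    ∃ n, algebraMap R S b ^ n * g ∈ I.map (algebraMap R S) := by
  induction I using IsNoetherian.induction generalizing g with | hgt I IH => ?_
  by_cases hI : Ideal.IsRadical I
  · exact ⟨1, by simpa using hWC.algebraMap_mul_mem_map_of_isRadical hI hb hfg⟩
  -- Pick `t ∉ I` with `t √I ⊆ I`: then both `(t) + I` and `I : t` strictly contain `I`.
  obtain ⟨x, hx, hxI⟩ := SetLike.not_le_iff_exists.mp hI
  obtain ⟨k, hk⟩ := Ideal.exists_radical_pow_le_of_fg I (IsNoetherian.noetherian _)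
  obtain ⟨t, htI, ht⟩ := Ideal.exists_notMem_forall_mul_mem_of_pow_le hk
    fun hI => hxI (hI ▸ Submodule.mem_top)
  have hlt_sup : I < Ideal.span {t} ⊔ I :=
    right_lt_sup.mpr fun ht => htI (Ideal.span_singleton_le_iff_mem I |>.mp ht)
  obtain ⟨n, hn⟩ := IH _ hlt_sup (Ideal.map_mono le_sup_right hfg)
  rw [Ideal.map_sup, Ideal.map_span, Set.image_singleton, Ideal.mem_span_singleton_sup] at hn
  obtain ⟨v, u, hu, hvu⟩ := hn
  have hfv : algebraMap R S t * (f * v) ∈ Ideal.map (algebraMap R S) I := by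
    rw [show algebraMap R S t * (f * v) = algebraMap R S b ^ n * (f * g) - f * u by
      linear_combination f * hvu]
    exact sub_mem (Ideal.mul_mem_left _ _ hfg) (Ideal.mul_mem_left _ _ hu)
  have hlt_colon : I < I.colon {t} := SetLike.lt_iff_le_and_exists.mpr
    ⟨fun y hy => Submodule.mem_colon_singleton.mpr (Ideal.mul_mem_right _ I hy), x,
      Submodule.mem_colon_singleton.mpr (by rw [smul_eq_mul, mul_comm]; exact ht x hx), hxI⟩
  obtain ⟨m, hm⟩ := IH _ hlt_colon (mem_map_colon_of_algebraMap_mul_mem hfv)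
  refine ⟨m + n, ?_⟩
  rw [show algebraMap R S b ^ (m + n) * g =
      algebraMap R S b ^ m * u + algebraMap R S t * (algebraMap R S b ^ m * v) by
    linear_combination -(algebraMap R S b ^ m) * hvu]
  exact add_mem (Ideal.mul_mem_left _ _ hu) (algebraMap_mul_mem_map_of_mem_map_colon hm)

theorem IsWeakContent.mem_map_of_mul_mem_map [IsNoetherianRing R] [Module.Flat R S]
    (hWC : IsWeakContent R S) {I : Ideal R} {f g : S} {b : R} (hb : b ∈ orContent R f)
    (hreg : Ideal.Quotient.mk I b ∈ nonZeroDivisors (R ⧸ I))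
    (hfg : f * g ∈ I.map (algebraMap R S)) : g ∈ I.map (algebraMap R S) := by
  obtain ⟨n, hn⟩ := hWC.exists_pow_mul_mem_map hb hfg
  rw [← map_pow] at hn
  have hcolon : I.colon {b ^ n} = I := by
    refine le_antisymm (fun x hx => ?_) fun x hx => Submodule.mem_colon_singleton.mpr
      (I.mul_mem_right _ hx)
    rw [Submodule.mem_colon_singleton, smul_eq_mul, ← Ideal.Quotient.eq_zero_iff_mem, map_mul,
      map_pow, mul_right_mem_nonZeroDivisors_eq_zero_iff (pow_mem hreg n)] at hx
    exact Ideal.Quotient.eq_zero_iff_mem.mp hx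
  rw [← hcolon]
  exact mem_map_colon_of_algebraMap_mul_mem hn

theorem IsWeakContent.isMcCoy_quotient [IsNoetherianRing R] [Module.Flat R S]
    (hWC : IsWeakContent R S) (I : Ideal R) : IsMcCoy (R ⧸ I) (S ⧸ I.map (algebraMap R S)) := by
  intro f' g' hfg hg
  obtain ⟨f, rfl⟩ := Ideal.Quotient.mk_surjective f'
  obtain ⟨g, rfl⟩ := Ideal.Quotient.mk_surjective g'
  rw [← map_mul, Ideal.Quotient.eq_zero_iff_mem] at hfg
  rw [ne_eq, Ideal.Quotient.eq_zero_iff_mem] at hg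
  have hdisj : Disjoint ((orContent R f).map (Ideal.Quotient.mk I) : Set (R ⧸ I))
      (nonZeroDivisors (R ⧸ I)) := by
    refine Set.disjoint_left.mpr fun a ha hreg => ?_
    obtain ⟨b, hb, rfl⟩ := (Ideal.mem_map_iff_of_surjective _ Ideal.Quotient.mk_surjective).mp ha
    exact hg (hWC.mem_map_of_mul_mem_map hb hreg hfg)
  obtain ⟨r, hr, hr0⟩ :=
    SetLike.exists_of_lt (Ideal.bot_lt_annihilator_of_disjoint_nonZeroDivisors hdisj)
  refine ⟨r, fun h => hr0 (h ▸ Submodule.zero_mem _), fun a ha => ?_⟩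
  rw [hWC.1.orContent_quotient] at ha
  simpa using congrArg Subtype.val (Module.mem_annihilator.mp hr ⟨a, ha⟩)

end

/-- Let `R` be Noetherian and `R → S` a faithfully flat Ohm-Rush algebra. Then
`S` is a weak content `R`-algebra iff `R → S` is residually McCoy. -/
theorem stmt_14 (R S : Type*) [CommRing R] [CommRing S] [Algebra R S]
    [IsNoetherianRing R] [Module.FaithfullyFlat R S]
    (hOR : IsOhmRush R S) :
    IsWeakContent R S ↔
      ∀ I : Ideal R, IsMcCoy (R ⧸ I) (S ⧸ I.map (algebraMap R S)) :=
  ⟨fun hWC I => hWC.isMcCoy_quotient I, fun hMc => hOR.isWeakContent_of_isMcCoy fun P _ => hMc P⟩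
end
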